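/- For γ = (γ₀, γ₁)σ ∈ Aut(T) and n ≥ 2, one has sgn_n(γ) = sgn_{n−1}(γ₀γ₁). In particular, γ is an odometer if and only if γ₀γ₁ is an odometer. -/

import Mathlib

open Equiv

/-- Vertices of the infinite rooted binary tree: finite words over `Bool`.
The parent of a nonempty word is `dropLast`. -/
abbrev Wd := List Bool

/-- The group `Ω = Aut(T)` of automorphisms of the infinite rooted binary tree,
realized as the subgroup of permutations of the vertex set preserving length
(levels) and the parent relation. -/
def OmegaSG : Subgroup (Equiv.Perm Wd) where
  carrier := {σ | (∀ w, (σ w).length = w.length) ∧ ∀ w, (σ w).dropLast = σ w.dropLast}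
  one_mem' := ⟨fun _ => rfl, fun _ => rfl⟩
  mul_mem' := by
    rintro σ τ ⟨hσl, hσd⟩ ⟨hτl, hτd⟩
    refine ⟨fun w => ?_, fun w => ?_⟩
    · simp [Equiv.Perm.mul_apply, hσl, hτl]
    · simp [Equiv.Perm.mul_apply, hσd, hτd]
  inv_mem' := by
    rintro σ ⟨hl, hd⟩
    refine ⟨fun w => ?_, fun w => ?_⟩
    · have := hl (σ⁻¹ w)
      rw [show σ (σ⁻¹ w) = w from σ.apply_symm_apply w] at this
      exact this.symm
    · apply σ.injective
      have := hd (σ⁻¹ w)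
      rw [show σ (σ⁻¹ w) = w from σ.apply_symm_apply w] at this
      rw [← this]
      simp

/-- The section pairing: `(u,v)` acts as `u` on the subtree rooted at `false`
and as `v` on the subtree rooted at `true`. -/
def pairFun (f g : Wd → Wd) : Wd → Wd
  | [] => []
  | false :: w => false :: f w
  | true :: w => true :: g w

@[simp] lemma pairFun_nil (f g : Wd → Wd) : pairFun f g [] = [] := rfl
@[simp] lemma pairFun_false (f g : Wd → Wd) (w : Wd) :
    pairFun f g (false :: w) = false :: f w := rfl
@[simp] lemma pairFun_true (f g : Wd → Wd) (w : Wd) :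
    pairFun f g (true :: w) = true :: g w := rfl

lemma pairFun_comp (f g f' g' : Wd → Wd) (hf : ∀ w, f (f' w) = w) (hg : ∀ w, g (g' w) = w) :
    ∀ w, pairFun f g (pairFun f' g' w) = w := by
  rintro (_ | ⟨(_|_), w⟩) <;> simp [hf, hg]

/-- The permutation `(u,v)` of the tree. -/
def pairPerm (u v : Equiv.Perm Wd) : Equiv.Perm Wd where
  toFun := pairFun u v
  invFun := pairFun u.symm v.symm
  left_inv := pairFun_comp _ _ _ _ (fun w => u.symm_apply_apply w) (fun w => v.symm_apply_apply w)
  right_inv := pairFun_comp _ _ _ _ (fun w => u.apply_symm_apply w) (fun w => v.apply_symm_apply w)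

@[simp] lemma pairPerm_apply (u v : Equiv.Perm Wd) (w : Wd) :
    pairPerm u v w = pairFun u v w := rfl

/-- The first-level swap `σ`. -/
def swapPerm : Equiv.Perm Wd where
  toFun w := match w with | [] => [] | b :: w => (!b) :: w
  invFun w := match w with | [] => [] | b :: w => (!b) :: w
  left_inv := by rintro (_ | ⟨b, w⟩) <;> simp
  right_inv := by rintro (_ | ⟨b, w⟩) <;> simp

@[simp] lemma swapPerm_nil : swapPerm [] = [] := rfl
@[simp] lemma swapPerm_cons (b : Bool) (w : Wd) : swapPerm (b :: w) = (!b) :: w := rfl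

lemma swapPerm_mem : swapPerm ∈ OmegaSG := by
  constructor
  · rintro (_ | ⟨b, w⟩) <;> simp
  · rintro (_ | ⟨b, w⟩)
    · simp
    · rcases eq_or_ne w [] with rfl | hw
      · simp
      · simp only [swapPerm_cons, List.dropLast_cons_of_ne_nil hw]

lemma mem_omega_length {u : Equiv.Perm Wd} (hu : u ∈ OmegaSG) (w : Wd) :
    (u w).length = w.length := hu.1 w

lemma mem_omega_ne_nil {u : Equiv.Perm Wd} (hu : u ∈ OmegaSG) {w : Wd} (hw : w ≠ []) :
    u w ≠ [] := by
  intro h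
  exact hw (List.eq_nil_of_length_eq_zero (by rw [← hu.1 w, h]; rfl))

lemma mem_omega_nil {u : Equiv.Perm Wd} (hu : u ∈ OmegaSG) : u [] = [] :=
  List.eq_nil_of_length_eq_zero (hu.1 [])

lemma pairPerm_mem {u v : Equiv.Perm Wd} (hu : u ∈ OmegaSG) (hv : v ∈ OmegaSG) :
    pairPerm u v ∈ OmegaSG := by
  constructor
  · rintro (_ | ⟨(_|_), w⟩) <;> simp [hu.1, hv.1]
  · rintro (_ | ⟨(_|_), w⟩)
    · simp
    · rcases eq_or_ne w [] with rfl | hw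
      · simp [mem_omega_nil hu]
      · simp only [pairPerm_apply, pairFun_false, List.dropLast_cons_of_ne_nil hw,
          List.dropLast_cons_of_ne_nil (mem_omega_ne_nil hu hw)]
        rw [hu.2]
    · rcases eq_or_ne w [] with rfl | hw
      · simp [mem_omega_nil hv]
      · simp only [pairPerm_apply, pairFun_true, List.dropLast_cons_of_ne_nil hw,
          List.dropLast_cons_of_ne_nil (mem_omega_ne_nil hv hw)]
        rw [hv.2]

/-- `(u,v)` as an element of `Ω`. -/
def pairOm (u v : OmegaSG) : OmegaSG := ⟨pairPerm u.1 v.1, pairPerm_mem u.2 v.2⟩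

/-- `σ` as an element of `Ω`. -/
def swapOm : OmegaSG := ⟨swapPerm, swapPerm_mem⟩

/-! ### Levels, restriction, sign, odometers -/

/-- Level `n` of the tree: words of length `n`. -/
abbrev Lv (n : ℕ) := {w : Wd // w.length = n}

instance fintypeLv (n : ℕ) : Fintype (Lv n) := by
  apply Fintype.ofSurjective (fun g : Fin n → Bool => (⟨List.ofFn g, List.length_ofFn (f := g)⟩ : Lv n))
  rintro ⟨w, rfl⟩
  exact ⟨w.get, Subtype.ext (List.ofFn_get w)⟩

/-- The permutation induced by `g ∈ Ω` on level `n`. -/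
def levelPerm (n : ℕ) (g : OmegaSG) : Equiv.Perm (Lv n) where
  toFun w := ⟨g.1 w.1, by rw [mem_omega_length g.2, w.2]⟩
  invFun w := ⟨(g⁻¹ : OmegaSG).1 w.1, by rw [mem_omega_length (g⁻¹ : OmegaSG).2, w.2]⟩
  left_inv w := Subtype.ext (by simp)
  right_inv w := Subtype.ext (by simp)

/-- Restriction to level `n` as a group homomorphism. -/
def levelHom (n : ℕ) : OmegaSG →* Equiv.Perm (Lv n) where
  toFun := levelPerm n
  map_one' := Equiv.ext fun w => Subtype.ext rfl
  map_mul' g h := Equiv.ext fun w => Subtype.ext rfl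

/-- `sgn_n`: the sign of the permutation induced on level `n`. -/
noncomputable def sgn (n : ℕ) (g : OmegaSG) : ℤˣ := Equiv.Perm.sign (levelPerm n g)

/-- An odometer: an element acting transitively on every level of the tree. -/
def IsOdometer (g : OmegaSG) : Prop :=
  ∀ n : ℕ, ∀ v w : Lv n, ∃ k : ℤ, ((g ^ k : OmegaSG) : Equiv.Perm Wd) v.1 = w.1

/-! ### The profinite topology on `Aut(T)` -/

instance : TopologicalSpace Wd := ⊥
instance : DiscreteTopology Wd := ⟨rfl⟩
instance : TopologicalSpace (Equiv.Perm Wd) :=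
  TopologicalSpace.induced (fun g => (g : Wd → Wd)) Pi.topologicalSpace

lemma continuous_permCoe : Continuous (fun g : Equiv.Perm Wd => (g : Wd → Wd)) :=
  continuous_induced_dom

lemma continuous_permApply (w : Wd) : Continuous fun g : Equiv.Perm Wd => g w :=
  (continuous_apply w).comp continuous_permCoe

instance : IsTopologicalGroup (Equiv.Perm Wd) where
  continuous_mul := by
    apply continuous_induced_rng.2
    apply continuous_pi
    intro w
    rw [continuous_discrete_rng]
    intro y
    have h : (fun p : Equiv.Perm Wd × Equiv.Perm Wd => ((p.1 * p.2 : Equiv.Perm Wd) : Wd → Wd) w) ⁻¹' {y}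
        = ⋃ x : Wd, {p : Equiv.Perm Wd × Equiv.Perm Wd | p.2 w = x} ∩ {p | p.1 x = y} := by
      ext p
      simp only [Set.mem_preimage, Set.mem_singleton_iff, Set.mem_iUnion, Set.mem_inter_iff,
        Set.mem_setOf_eq, Equiv.Perm.mul_apply]
      constructor
      · intro hh; exact ⟨p.2 w, rfl, hh⟩
      · rintro ⟨x, rfl, hh⟩; exact hh
    show IsOpen ((fun p : Equiv.Perm Wd × Equiv.Perm Wd =>
      ((p.1 * p.2 : Equiv.Perm Wd) : Wd → Wd) w) ⁻¹' {y})
    rw [h]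
    refine isOpen_iUnion fun x => IsOpen.inter ?_ ?_
    · exact IsOpen.preimage ((continuous_permApply w).comp continuous_snd) (isOpen_discrete {x})
    · exact IsOpen.preimage ((continuous_permApply x).comp continuous_fst) (isOpen_discrete {y})
  continuous_inv := by
    apply continuous_induced_rng.2
    apply continuous_pi
    intro w
    rw [continuous_discrete_rng]
    intro y
    have h : (fun g : Equiv.Perm Wd => ((g⁻¹ : Equiv.Perm Wd) : Wd → Wd) w) ⁻¹' {y}
        = {g : Equiv.Perm Wd | g y = w} := by
      ext g
      simp only [Set.mem_preimage, Set.mem_singleton_iff, Set.mem_setOf_eq]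
      constructor
      · rintro rfl; simp
      · intro hh; rw [← hh]; simp
    show IsOpen ((fun g : Equiv.Perm Wd => ((g⁻¹ : Equiv.Perm Wd) : Wd → Wd) w) ⁻¹' {y})
    rw [h]
    exact IsOpen.preimage (continuous_permApply y) (isOpen_discrete {w})

/-! ### The recursive generators `a₁ = σ`, `a₂ = (a₃⁻¹, a₂⁻¹)σ`, `a₃ = (a₂, a₃)` -/

mutual
  /-- The underlying function of `a₂`. -/
  def pA : Wd → Wd
    | [] => []
    | false :: w => true :: piA w
    | true :: w => false :: qiA w
  /-- The underlying function of `a₃`. -/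
  def qA : Wd → Wd
    | [] => []
    | false :: w => false :: pA w
    | true :: w => true :: qA w
  /-- The underlying function of `a₂⁻¹`. -/
  def piA : Wd → Wd
    | [] => []
    | false :: w => true :: qA w
    | true :: w => false :: pA w
  /-- The underlying function of `a₃⁻¹`. -/
  def qiA : Wd → Wd
    | [] => []
    | false :: w => false :: piA w
    | true :: w => true :: qiA w
end

lemma a_inv_lemma : ∀ w : Wd, pA (piA w) = w ∧ piA (pA w) = w ∧ qA (qiA w) = w ∧ qiA (qA w) = w := by
  intro w
  induction w with
  | nil => simp [pA, qA, piA, qiA]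
  | cons b w ih =>
    cases b <;>
      simp [pA, qA, piA, qiA, ih.1, ih.2.1, ih.2.2.1, ih.2.2.2]

/-- The generator `a₂`. -/
def a2 : Equiv.Perm Wd where
  toFun := pA
  invFun := piA
  left_inv w := (a_inv_lemma w).2.1
  right_inv w := (a_inv_lemma w).1

/-- The generator `a₃`. -/
def a3 : Equiv.Perm Wd where
  toFun := qA
  invFun := qiA
  left_inv w := (a_inv_lemma w).2.2.2
  right_inv w := (a_inv_lemma w).2.2.1

lemma a_length_lemma : ∀ w : Wd, (pA w).length = w.length ∧ (qA w).length = w.length ∧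
    (piA w).length = w.length ∧ (qiA w).length = w.length := by
  intro w
  induction w with
  | nil => simp [pA, qA, piA, qiA]
  | cons b w ih =>
    cases b <;>
      simp [pA, qA, piA, qiA, ih.1, ih.2.1, ih.2.2.1, ih.2.2.2]

lemma a_ne_nil {f : Wd → Wd} (hf : ∀ w : Wd, (f w).length = w.length) {w : Wd} (hw : w ≠ []) :
    f w ≠ [] := by
  intro h
  exact hw (List.eq_nil_of_length_eq_zero (by rw [← hf w, h]; rfl))

lemma a_dropLast_lemma : ∀ w : Wd, (pA w).dropLast = pA w.dropLast ∧
    (qA w).dropLast = qA w.dropLast ∧ (piA w).dropLast = piA w.dropLast ∧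
    (qiA w).dropLast = qiA w.dropLast := by
  intro w
  induction w with
  | nil => simp [pA, qA, piA, qiA]
  | cons b w ih =>
    rcases eq_or_ne w [] with rfl | hw
    · cases b <;> simp [pA, qA, piA, qiA]
    · have hp := a_ne_nil (fun w => (a_length_lemma w).1) hw
      have hq := a_ne_nil (fun w => (a_length_lemma w).2.1) hw
      have hpi := a_ne_nil (fun w => (a_length_lemma w).2.2.1) hw
      have hqi := a_ne_nil (fun w => (a_length_lemma w).2.2.2) hw
      cases b <;>
        simp [pA, qA, piA, qiA, List.dropLast_cons_of_ne_nil hw,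
          List.dropLast_cons_of_ne_nil hp, List.dropLast_cons_of_ne_nil hq,
          List.dropLast_cons_of_ne_nil hpi, List.dropLast_cons_of_ne_nil hqi,
          ih.1, ih.2.1, ih.2.2.1, ih.2.2.2]

lemma a2_mem : a2 ∈ OmegaSG :=
  ⟨fun w => (a_length_lemma w).1, fun w => (a_dropLast_lemma w).1⟩

lemma a3_mem : a3 ∈ OmegaSG :=
  ⟨fun w => (a_length_lemma w).2.1, fun w => (a_dropLast_lemma w).2.1⟩

/-- `a₁ = σ` as an element of `Ω`. -/
def A1 : OmegaSG := swapOm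
/-- `a₂` as an element of `Ω`. -/
def A2 : OmegaSG := ⟨a2, a2_mem⟩
/-- `a₃` as an element of `Ω`. -/
def A3 : OmegaSG := ⟨a3, a3_mem⟩

/-- `G = ⟨⟨a₁, a₃⟩⟩`, the topological closure of the subgroup generated by `a₁` and `a₃`:
a model of the geometric iterated monodromy group of `f(x) = 2/(x-1)²`. -/
noncomputable def Ggrp : Subgroup OmegaSG :=
  (Subgroup.closure {A1, A3}).topologicalClosure

/-- The normal closure in `G` of the closed subgroup generated by an element `c`:
the closed subgroup generated by all `G`-conjugates of `c`. -/
noncomputable def nclG (c : OmegaSG) : Subgroup OmegaSG :=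
  (Subgroup.closure {x | ∃ g ∈ Ggrp, x = g * c * g⁻¹}).topologicalClosure

/-- `U`, the normal closure in `G` of `⟨⟨a₂a₃⁻¹⟩⟩`. -/
noncomputable def Ugrp : Subgroup OmegaSG := nclG (A2 * A3⁻¹)

/-- `H₁`, the normal closure in `G` of `⟨⟨a₁⟩⟩`. -/
noncomputable def H1grp : Subgroup OmegaSG := nclG A1

/-- `H₃`, the normal closure in `G` of `⟨⟨a₃⟩⟩`. -/
noncomputable def H3grp : Subgroup OmegaSG := nclG A3

/-! On level `n + 1 ≅ {0, 1} × level n`, `(γ₀, γ₁)` acts fibrewise, with sign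
`sgn_n γ₀ · sgn_n γ₁ = sgn_n (γ₀γ₁)`, while `σ` is a product of `2 ^ n` disjoint transpositions,
an even permutation once `n ≥ 1`.

For the odometer part, `γ² = (γ₀γ₁, γ₁γ₀)`: even powers of `γ` move `0w` along the
`γ₀γ₁`-orbit of `w`, odd powers move it into the subtree at `1`, and `γ` maps `0 γ₁⁻¹(w)` to `1w`.
Hence `0v` and `0w` share a `γ`-orbit iff `v` and `w` share a `γ₀γ₁`-orbit, and every
`γ`-orbit on level `n + 1` meets the subtree at `0`. -/

open Equiv.Perm

lemma sgn_mul (n : ℕ) (g h : OmegaSG) : sgn n (g * h) = sgn n g * sgn n h :=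
  map_mul (sign.comp (levelHom n)) g h

def consEquiv (n : ℕ) : Bool × Lv n ≃ Lv (n + 1) where
  toFun bw := ⟨bw.1 :: bw.2.1, by simp [bw.2.2]⟩
  invFun w := (w.1.headI, ⟨w.1.tail, by rw [List.length_tail, w.2]; rfl⟩)
  left_inv := by rintro ⟨b, w, hw⟩; rfl
  right_inv := by
    rintro ⟨(_ | ⟨b, w⟩), hw⟩
    · simp at hw
    · rfl

lemma card_lv_succ (n : ℕ) : Fintype.card (Lv (n + 1)) = 2 * Fintype.card (Lv n) := by
  rw [← Fintype.card_congr (consEquiv n), Fintype.card_prod, Fintype.card_bool]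

lemma levelPerm_succ_pairOm (n : ℕ) (u v : OmegaSG) :
    levelPerm (n + 1) (pairOm u v) =
      (consEquiv n).permCongr (prodCongrRight fun b => cond b (levelPerm n v) (levelPerm n u)) := by
  ext ⟨(_ | ⟨(_ | _), w⟩), hw⟩
  · simp at hw
  · rfl
  · rfl

lemma levelPerm_succ_swapOm (n : ℕ) :
    levelPerm (n + 1) swapOm =
      (consEquiv n).permCongr (prodCongrLeft fun _ => Equiv.swap false true) := by
  ext ⟨(_ | ⟨(_ | _), w⟩), hw⟩
  · simp at hw
  · rfl
  · rfl

lemma sgn_succ_succ_swapOm (n : ℕ) : sgn (n + 2) swapOm = 1 := by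
  rw [sgn, levelPerm_succ_swapOm, sign_permCongr, sign_prodCongrLeft, Finset.prod_const,
    sign_swap Bool.false_ne_true, Finset.card_univ, card_lv_succ, pow_mul, neg_one_sq, one_pow]

lemma sgn_succ_pairOm (n : ℕ) (u v : OmegaSG) : sgn (n + 1) (pairOm u v) = sgn n (u * v) := by
  rw [sgn_mul, sgn, sgn, sgn, levelPerm_succ_pairOm, sign_permCongr, sign_prodCongrRight,
    Fintype.prod_bool, cond_true, cond_false, mul_comm]

lemma sgn_succ_succ_pairOm_mul_swapOm (n : ℕ) (u v : OmegaSG) :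
    sgn (n + 2) (pairOm u v * swapOm) = sgn (n + 1) (u * v) := by
  rw [sgn_mul, sgn_succ_succ_swapOm, mul_one, sgn_succ_pairOm]

lemma pairPerm_mul (u v u' v' : Perm Wd) :
    pairPerm u v * pairPerm u' v' = pairPerm (u * u') (v * v') := by
  ext (_ | ⟨(_ | _), w⟩) <;> rfl

def pairHom : Perm Wd × Perm Wd →* Perm Wd where
  toFun p := pairPerm p.1 p.2
  map_one' := by ext (_ | ⟨(_ | _), w⟩) <;> rfl
  map_mul' p q := (pairPerm_mul p.1 p.2 q.1 q.2).symm

lemma pairPerm_zpow (u v : Perm Wd) (k : ℤ) : pairPerm u v ^ k = pairPerm (u ^ k) (v ^ k) :=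
  (map_zpow pairHom (u, v) k).symm

lemma pairPerm_mul_swapPerm_sq (u v : Perm Wd) :
    (pairPerm u v * swapPerm) ^ 2 = pairPerm (u * v) (v * u) := by
  ext (_ | ⟨(_ | _), w⟩) <;> rfl

lemma pairPerm_mul_swapPerm_zpow_two_mul (u v : Perm Wd) (k : ℤ) :
    (pairPerm u v * swapPerm) ^ (2 * k) = pairPerm ((u * v) ^ k) ((v * u) ^ k) := by
  rw [zpow_mul, zpow_two, ← sq, pairPerm_mul_swapPerm_sq, pairPerm_zpow]

lemma sameCycle_pairPerm_mul_swapPerm_false_iff (u v : Perm Wd) (x y : Wd) :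
    SameCycle (pairPerm u v * swapPerm) (false :: x) (false :: y) ↔ SameCycle (u * v) x y := by
  constructor
  · rintro ⟨k, hk⟩
    obtain ⟨j, rfl | rfl⟩ := Int.even_or_odd' k
    · rw [pairPerm_mul_swapPerm_zpow_two_mul] at hk
      exact ⟨j, (List.cons.inj hk).2⟩
    · rw [zpow_add_one, pairPerm_mul_swapPerm_zpow_two_mul] at hk
      simp at hk
  · rintro ⟨k, hk⟩
    exact ⟨2 * k, by simp [pairPerm_mul_swapPerm_zpow_two_mul, hk]⟩

lemma sameCycle_pairPerm_mul_swapPerm_true (u v : Perm Wd) (x : Wd) :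
    SameCycle (pairPerm u v * swapPerm) (true :: x) (false :: v⁻¹ x) := by
  have : (pairPerm u v * swapPerm) (false :: v⁻¹ x) = true :: x := by simp
  rw [← this, sameCycle_apply_left]

def LevelTransitive (f : Perm Wd) (n : ℕ) : Prop :=
  ∀ v w : Lv n, SameCycle f v.1 w.1

lemma isOdometer_iff_forall_levelTransitive (g : OmegaSG) :
    IsOdometer g ↔ ∀ n, LevelTransitive g n := by
  simp [IsOdometer, LevelTransitive, SameCycle]

lemma levelTransitive_zero (f : Perm Wd) : LevelTransitive f 0 := by
  rintro ⟨v, hv⟩ ⟨w, hw⟩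
  rw [List.length_eq_zero_iff] at hv hw
  subst hv hw
  rfl

lemma levelTransitive_pairPerm_mul_swapPerm_succ_iff {u v : Perm Wd} (hv : v ∈ OmegaSG) (n : ℕ) :
    LevelTransitive (pairPerm u v * swapPerm) (n + 1) ↔ LevelTransitive (u * v) n := by
  constructor
  · intro h x y
    rw [← sameCycle_pairPerm_mul_swapPerm_false_iff]
    exact h ⟨false :: x.1, by simp [x.2]⟩ ⟨false :: y.1, by simp [y.2]⟩
  · intro h
    have below_false : ∀ x : Lv (n + 1), ∃ t : Lv n,
        SameCycle (pairPerm u v * swapPerm) x.1 (false :: t.1) := by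
      rintro ⟨(_ | ⟨(_ | _), t⟩), ht⟩
      · simp at ht
      · exact ⟨⟨t, by simpa using ht⟩, SameCycle.refl _ _⟩
      · refine ⟨⟨v⁻¹ t, ?_⟩, sameCycle_pairPerm_mul_swapPerm_true u v t⟩
        rw [mem_omega_length (inv_mem hv)]
        simpa using ht
    intro x y
    obtain ⟨s, hs⟩ := below_false x
    obtain ⟨t, ht⟩ := below_false y
    exact hs.trans (((sameCycle_pairPerm_mul_swapPerm_false_iff u v _ _).2 (h s t)).trans ht.symm)

/-- For `γ = (γ₀,γ₁)σ` and `n ≥ 2`, `sgn_n(γ) = sgn_{n-1}(γ₀γ₁)`;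
in particular `γ` is an odometer iff `γ₀γ₁` is. -/
theorem stmt4 (γ₀ γ₁ : OmegaSG) :
    (∀ n : ℕ, 2 ≤ n → sgn n (pairOm γ₀ γ₁ * swapOm) = sgn (n - 1) (γ₀ * γ₁)) ∧
    (IsOdometer (pairOm γ₀ γ₁ * swapOm) ↔ IsOdometer (γ₀ * γ₁)) := by
  refine ⟨fun n hn => ?_, ?_⟩
  · obtain ⟨m, rfl⟩ : ∃ m, n = m + 2 := ⟨n - 2, by omega⟩
    exact sgn_succ_succ_pairOm_mul_swapOm m γ₀ γ₁
  · have level_succ := levelTransitive_pairPerm_mul_swapPerm_succ_iff (u := γ₀.1) γ₁.2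
    rw [isOdometer_iff_forall_levelTransitive, isOdometer_iff_forall_levelTransitive]
    refine ⟨fun h n => (level_succ n).1 (h (n + 1)), fun h n => ?_⟩
    cases n with
    | zero => exact levelTransitive_zero _
    | succ n => exact (level_succ n).2 (h n)
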